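/- arXiv:2406.15858 — 4 statements merged into one kernel-verified Lean document; each statement's English description precedes it below -/
import Mathlib

section
/- Let λ and β be positive random variables on a probability space (Ω, 𝓕, ℙ) satisfying 𝔼[(β/λ^{1/β}) ((β+1)/β)^{(β+1)/β}] < ∞. Then the mixed Kies density f(t) = 𝔼[h(t; λ, β)] tends to 0 as t → 1−. -/
/-!
Put `x = λ (t / (1 - t)) ^ β` and `k = (β + 1) / β`. Then
`h(t; λ, β) = β λ ^ (-1/β) t ^ (-2) x ^ k e ^ (-x)`. Since `x ^ k e ^ (-x) ≤ k ^ k`, on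
`(1/2, 1)` the density is dominated by four times the integrable function of the hypothesis;
since `x → ∞` as `t → 1⁻`, it tends to `0` pointwise. Dominated convergence concludes.
-/

open MeasureTheory Filter Set Topology

noncomputable def kiesDensity (l b t : ℝ) : ℝ :=
  l * b * t ^ (b - 1) * (1 - t) ^ (-(b + 1)) * Real.exp (-l * (t / (1 - t)) ^ b)

lemma rpow_mul_exp_neg_le {x k : ℝ} (hx : 0 ≤ x) (hk : 0 < k) :
    x ^ k * Real.exp (-x) ≤ k ^ k := by
  have hxk : x / k ≤ Real.exp (x / k) := by linarith [Real.add_one_le_exp (x / k)]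
  rw [Real.exp_neg, ← div_eq_mul_inv, div_le_iff₀ (Real.exp_pos x)]
  calc x ^ k = k ^ k * (x / k) ^ k := by
        rw [← Real.mul_rpow hk.le (by positivity), mul_div_cancel₀ _ hk.ne']
    _ ≤ k ^ k * Real.exp (x / k) ^ k := by gcongr
    _ = k ^ k * Real.exp x := by rw [← Real.exp_mul, div_mul_cancel₀ _ hk.ne']

lemma tendsto_div_one_sub_nhdsLT_one : Tendsto (fun t : ℝ => t / (1 - t)) (𝓝[<] 1) atTop := by
  have hnum : Tendsto (fun t : ℝ => t) (𝓝[<] 1) (𝓝 1) := nhdsWithin_le_nhds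
  have hden : Tendsto (fun t : ℝ => 1 - t) (𝓝[<] 1) (𝓝[>] 0) := by
    refine tendsto_nhdsWithin_of_tendsto_nhds_of_eventually_within _ ?_ ?_
    · have h : Tendsto (fun t : ℝ => 1 - t) (𝓝 1) (𝓝 (1 - 1)) :=
        tendsto_const_nhds.sub tendsto_id
      rw [sub_self] at h
      exact h.mono_left nhdsWithin_le_nhds
    · filter_upwards [self_mem_nhdsWithin] with t (ht : t < 1)
      exact sub_pos.2 ht
  exact hnum.pos_mul_atTop one_pos (tendsto_inv_nhdsGT_zero.comp hden)

lemma kiesDensity_eq {l b t : ℝ} (hl : 0 < l) (hb : 0 < b) (ht0 : 0 < t) (ht1 : t < 1) :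
    kiesDensity l b t = b / l ^ (1 / b) / t ^ 2 *
      ((l * (t / (1 - t)) ^ b) ^ ((b + 1) / b) * Real.exp (-(l * (t / (1 - t)) ^ b))) := by
  have hu : 0 < 1 - t := sub_pos.2 ht1
  have hpow : (l * (t / (1 - t)) ^ b) ^ ((b + 1) / b) =
      l * l ^ (1 / b) * (t ^ (b - 1) * t ^ 2) / (1 - t) ^ (b + 1) := by
    rw [Real.mul_rpow hl.le (by positivity), ← Real.rpow_mul (by positivity),
      mul_div_cancel₀ _ hb.ne', Real.div_rpow ht0.le hu.le, add_div, div_self hb.ne',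
      Real.rpow_add hl, Real.rpow_one, ← Real.rpow_natCast t 2, ← Real.rpow_add ht0]
    norm_num
    ring_nf
  rw [kiesDensity, hpow, Real.rpow_neg hu.le, neg_mul]
  have : l ^ (1 / b) ≠ 0 := by positivity
  have : t ^ (b - 1) ≠ 0 := by positivity
  field_simp

lemma kiesDensity_nonneg {l b t : ℝ} (hl : 0 < l) (hb : 0 < b) (ht0 : 0 < t) (ht1 : t < 1) :
    0 ≤ kiesDensity l b t := by
  have hu : 0 < 1 - t := sub_pos.2 ht1
  rw [kiesDensity_eq hl hb ht0 ht1]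
  positivity

lemma kiesDensity_le {l b t : ℝ} (hl : 0 < l) (hb : 0 < b) (ht0 : 0 < t) (ht1 : t < 1) :
    kiesDensity l b t ≤ b / l ^ (1 / b) * ((b + 1) / b) ^ ((b + 1) / b) / t ^ 2 := by
  have hu : 0 < 1 - t := sub_pos.2 ht1
  calc kiesDensity l b t = b / l ^ (1 / b) / t ^ 2 *
        ((l * (t / (1 - t)) ^ b) ^ ((b + 1) / b) * Real.exp (-(l * (t / (1 - t)) ^ b))) :=
        kiesDensity_eq hl hb ht0 ht1
    _ ≤ b / l ^ (1 / b) / t ^ 2 * ((b + 1) / b) ^ ((b + 1) / b) := by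
        gcongr
        exact rpow_mul_exp_neg_le (by positivity) (by positivity)
    _ = b / l ^ (1 / b) * ((b + 1) / b) ^ ((b + 1) / b) / t ^ 2 := by ring

lemma norm_kiesDensity_le {l b t : ℝ} (hl : 0 < l) (hb : 0 < b) (ht0 : 1 / 2 < t) (ht1 : t < 1) :
    ‖kiesDensity l b t‖ ≤ 4 * (b / l ^ (1 / b) * ((b + 1) / b) ^ ((b + 1) / b)) := by
  rw [Real.norm_of_nonneg (kiesDensity_nonneg hl hb (by linarith) ht1)]
  refine (kiesDensity_le hl hb (by linarith) ht1).trans ?_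
  rw [div_le_iff₀ (by positivity)]
  have hK : 0 ≤ b / l ^ (1 / b) * ((b + 1) / b) ^ ((b + 1) / b) := by positivity
  have ht2 : 1 ≤ 4 * t ^ 2 := by nlinarith
  nlinarith [mul_le_mul_of_nonneg_left ht2 hK]

lemma tendsto_kiesDensity_nhdsLT_one {l b : ℝ} (hl : 0 < l) (hb : 0 < b) :
    Tendsto (kiesDensity l b) (𝓝[<] 1) (𝓝 0) := by
  have hscale : Tendsto (fun t => l * (t / (1 - t)) ^ b) (𝓝[<] 1) atTop :=
    ((tendsto_rpow_atTop hb).comp tendsto_div_one_sub_nhdsLT_one).const_mul_atTop hl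
  have hdecay : Tendsto (fun x : ℝ => x ^ ((b + 1) / b) * Real.exp (-x)) atTop (𝓝 0) := by
    simpa using tendsto_rpow_mul_exp_neg_mul_atTop_nhds_zero ((b + 1) / b) 1 one_pos
  have hfactor : Tendsto (fun t : ℝ => b / l ^ (1 / b) / t ^ 2) (𝓝[<] 1)
      (𝓝 (b / l ^ (1 / b) / 1 ^ 2)) :=
    (tendsto_const_nhds.div (tendsto_id.pow 2) (by norm_num)).mono_left nhdsWithin_le_nhds
  have hprod := hfactor.mul (hdecay.comp hscale)
  rw [mul_zero] at hprod
  refine hprod.congr' ?_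
  filter_upwards [Ioo_mem_nhdsLT zero_lt_one] with t ht
  exact (kiesDensity_eq hl hb ht.1 ht.2).symm

theorem mixed_kies_density_right_endpoint_general
    {Ω : Type*} [MeasurableSpace Ω] (μ : Measure Ω)
    (lam beta : Ω → ℝ) (hlam_meas : Measurable lam) (hbeta_meas : Measurable beta)
    (hlam_pos : ∀ ω, 0 < lam ω) (hbeta_pos : ∀ ω, 0 < beta ω)
    (hcond : Integrable (fun ω =>
        beta ω / lam ω ^ (1 / beta ω) *
          ((beta ω + 1) / beta ω) ^ ((beta ω + 1) / beta ω)) μ)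
    (f : ℝ → ℝ)
    (hf : ∀ t, f t = ∫ ω, lam ω * beta ω * t ^ (beta ω - 1) * (1 - t) ^ (-(beta ω + 1)) *
        Real.exp (-(lam ω) * (t / (1 - t)) ^ (beta ω)) ∂μ) :
    Tendsto f (nhdsWithin 1 (Set.Iio 1)) (nhds 0) := by
  have hf' : f = fun t => ∫ ω, kiesDensity (lam ω) (beta ω) t ∂μ := funext hf
  have hmeas (t : ℝ) : Measurable fun ω => kiesDensity (lam ω) (beta ω) t := by
    unfold kiesDensity; fun_prop
  have hnear : Ioo (1 / 2 : ℝ) 1 ∈ 𝓝[<] (1 : ℝ) := Ioo_mem_nhdsLT (by norm_num)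
  have hlim := tendsto_integral_filter_of_dominated_convergence (μ := μ) (f := fun _ => 0) _
    (Eventually.of_forall fun t => (hmeas t).aestronglyMeasurable)
    (mem_of_superset hnear fun t ⟨ht0, ht1⟩ =>
      ae_of_all _ fun ω => norm_kiesDensity_le (hlam_pos ω) (hbeta_pos ω) ht0 ht1)
    (hcond.const_mul 4)
    (ae_of_all _ fun ω => tendsto_kiesDensity_nhdsLT_one (hlam_pos ω) (hbeta_pos ω))
  rw [hf']
  simpa using hlim

theorem mixed_kies_density_right_endpoint
    {Ω : Type*} [MeasurableSpace Ω] (μ : Measure Ω) [IsProbabilityMeasure μ]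
    (lam beta : Ω → ℝ) (hlam_meas : Measurable lam) (hbeta_meas : Measurable beta)
    (hlam_pos : ∀ ω, 0 < lam ω) (hbeta_pos : ∀ ω, 0 < beta ω)
    (hcond : Integrable (fun ω =>
        beta ω / lam ω ^ (1 / beta ω) *
          ((beta ω + 1) / beta ω) ^ ((beta ω + 1) / beta ω)) μ)
    (f : ℝ → ℝ)
    (hf : ∀ t, f t = ∫ ω, lam ω * beta ω * t ^ (beta ω - 1) * (1 - t) ^ (-(beta ω + 1)) *
        Real.exp (-(lam ω) * (t / (1 - t)) ^ (beta ω)) ∂μ) :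
    Tendsto f (nhdsWithin 1 (Set.Iio 1)) (nhds 0) :=
  mixed_kies_density_right_endpoint_general μ lam beta hlam_meas hbeta_meas hlam_pos hbeta_pos hcond
    f hf
end

section
/- Let λ and β be positive random variables on a probability space (Ω, 𝓕, ℙ) and let F(t) = 𝔼[1 − exp(−λ (t/(1−t))^β)] for t ∈ (0,1). Then the equation F(d) + d = 1 has exactly one solution d in the interval (0,1). -/
/-!
Write `G t = F t + t`. Each Kies CDF vanishes at `0`, is monotone and continuous on `[0, 1)` and
takes values in `[0, 1]`, so by dominated convergence the mixture `F` has the same properties;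
moreover `F > 0` on `(0, 1)`. Hence `G` is continuous and strictly increasing on `[0, 1)` with
`G 0 = 0` and `G t > 1` for `t` close to `1`, and the intermediate value theorem gives exactly
one solution of `G d = 1`.
-/

open MeasureTheory Set

theorem existsUnique_mem_Ioo_add_self_eq_one {F : ℝ → ℝ} (hmono : MonotoneOn F (Ico 0 1))
    (hcont : ContinuousOn F (Ico 0 1)) (hzero : F 0 = 0) {c : ℝ} (hc : c ∈ Ioo 0 1)
    (hpos : 0 < F c) : ∃! d : ℝ, d ∈ Ioo 0 1 ∧ F d + d = 1 := by
  have hstrict : StrictMonoOn (fun t => F t + t) (Ico 0 1) := fun s hs t ht hst =>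
    add_lt_add_of_le_of_lt (hmono hs ht hst.le) hst
  set b := max c (1 - F c / 2)
  have hb : b ∈ Ico 0 1 := ⟨hc.1.le.trans (le_max_left _ _), max_lt hc.2 (by linarith)⟩
  have hGb : 1 < F b + b := by
    have hFcb : F c ≤ F b := hmono (Ioo_subset_Ico_self hc) hb (le_max_left _ _)
    linarith [le_max_right c (1 - F c / 2)]
  have hIcc : Icc 0 b ⊆ Ico 0 1 := Icc_subset_Ico_right hb.2
  obtain ⟨d, hd, hGd⟩ : 1 ∈ (fun t => F t + t) '' Icc 0 b :=
    intermediate_value_Icc hb.1 ((hcont.mono hIcc).add continuousOn_id)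
      ⟨by simp [hzero], hGb.le⟩
  have hd0 : d ≠ 0 := by rintro rfl; simp [hzero] at hGd
  refine ⟨d, ⟨⟨lt_of_le_of_ne hd.1 (Ne.symm hd0), (hIcc hd).2⟩, hGd⟩, ?_⟩
  rintro e ⟨he, hGe⟩
  exact hstrict.injOn (Ioo_subset_Ico_self he) (hIcc hd) (hGe.trans hGd.symm)

noncomputable def kiesCDF (lam beta t : ℝ) : ℝ :=
  1 - Real.exp (-lam * (t / (1 - t)) ^ beta)

section Kies

variable {lam beta t : ℝ}

lemma kiesCDF_zero (hbeta : beta ≠ 0) : kiesCDF lam beta 0 = 0 := by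
  simp [kiesCDF, Real.zero_rpow hbeta]

lemma kiesCDF_mem_Icc (hlam : 0 ≤ lam) (ht : t ∈ Icc 0 1) : kiesCDF lam beta t ∈ Icc 0 1 := by
  have hx : 0 ≤ (t / (1 - t)) ^ beta := Real.rpow_nonneg (div_nonneg ht.1 (by linarith [ht.2])) _
  have hexp : Real.exp (-lam * (t / (1 - t)) ^ beta) ≤ 1 :=
    Real.exp_le_one_iff.mpr (by nlinarith)
  have hexp_pos := Real.exp_pos (-lam * (t / (1 - t)) ^ beta)
  exact ⟨by unfold kiesCDF; linarith, by unfold kiesCDF; linarith⟩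

lemma norm_kiesCDF_le_one (hlam : 0 ≤ lam) (ht : t ∈ Icc 0 1) :
    ‖kiesCDF lam beta t‖ ≤ 1 := by
  obtain ⟨h0, h1⟩ := kiesCDF_mem_Icc (beta := beta) hlam ht
  rw [Real.norm_eq_abs, abs_le]
  constructor <;> linarith

lemma kiesCDF_pos (hlam : 0 < lam) (ht : t ∈ Ioo 0 1) : 0 < kiesCDF lam beta t := by
  have hx : 0 < (t / (1 - t)) ^ beta := Real.rpow_pos_of_pos (div_pos ht.1 (by linarith [ht.2])) _
  have hexp : Real.exp (-lam * (t / (1 - t)) ^ beta) < 1 :=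
    Real.exp_lt_one_iff.mpr (by nlinarith)
  unfold kiesCDF; linarith

lemma monotoneOn_kiesCDF (hlam : 0 ≤ lam) (hbeta : 0 ≤ beta) :
    MonotoneOn (kiesCDF lam beta) (Ico 0 1) := by
  intro s hs t ht hst
  have hodds : s / (1 - s) ≤ t / (1 - t) := by
    rw [div_le_div_iff₀ (by linarith [hs.2]) (by linarith [ht.2])]
    nlinarith
  have hpow : (s / (1 - s)) ^ beta ≤ (t / (1 - t)) ^ beta :=
    Real.rpow_le_rpow (div_nonneg hs.1 (by linarith [hs.2])) hodds hbeta
  have hexp := Real.exp_le_exp.mpr (mul_le_mul_of_nonpos_left hpow (neg_nonpos.mpr hlam))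
  unfold kiesCDF; linarith

lemma continuousOn_kiesCDF (hbeta : 0 ≤ beta) : ContinuousOn (kiesCDF lam beta) (Iio 1) := by
  intro t ht
  have hodds : ContinuousAt (fun t : ℝ => t / (1 - t)) t :=
    continuousAt_id.div (continuousAt_const.sub continuousAt_id) (sub_ne_zero.mpr (ne_of_gt ht))
  exact (continuousAt_const.sub
    (continuousAt_const.mul (hodds.rpow_const (Or.inr hbeta))).rexp).continuousWithinAt

end Kies

section Mixture

variable {Ω : Type*} [MeasurableSpace Ω] {μ : Measure Ω} {lam beta : Ω → ℝ}

noncomputable def mixedKiesCDF (μ : Measure Ω) (lam beta : Ω → ℝ) (t : ℝ) : ℝ :=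
  ∫ ω, kiesCDF (lam ω) (beta ω) t ∂μ

lemma measurable_kiesCDF (hlam : Measurable lam) (hbeta : Measurable beta) (t : ℝ) :
    Measurable fun ω => kiesCDF (lam ω) (beta ω) t :=
  measurable_const.sub (hlam.neg.mul (measurable_const.pow hbeta)).exp

lemma integrable_kiesCDF [IsFiniteMeasure μ] (hlam_meas : Measurable lam)
    (hbeta_meas : Measurable beta) (hlam : ∀ ω, 0 ≤ lam ω) {t : ℝ} (ht : t ∈ Icc 0 1) :
    Integrable (fun ω => kiesCDF (lam ω) (beta ω) t) μ :=
  (integrable_const 1).mono' (measurable_kiesCDF hlam_meas hbeta_meas t).aestronglyMeasurable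
    (ae_of_all _ fun ω => norm_kiesCDF_le_one (hlam ω) ht)

lemma mixedKiesCDF_zero (hbeta : ∀ ω, beta ω ≠ 0) : mixedKiesCDF μ lam beta 0 = 0 := by
  simp [mixedKiesCDF, kiesCDF_zero (hbeta _)]

lemma mixedKiesCDF_pos [IsFiniteMeasure μ] [NeZero μ] (hlam_meas : Measurable lam)
    (hbeta_meas : Measurable beta) (hlam : ∀ ω, 0 < lam ω) {t : ℝ} (ht : t ∈ Ioo 0 1) :
    0 < mixedKiesCDF μ lam beta t := by
  have hpos : ∀ ω, 0 < kiesCDF (lam ω) (beta ω) t := fun ω => kiesCDF_pos (hlam ω) ht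
  refine (integral_pos_iff_support_of_nonneg (fun ω => (hpos ω).le)
    (integrable_kiesCDF hlam_meas hbeta_meas (fun ω => (hlam ω).le)
      (Ioo_subset_Icc_self ht))).mpr ?_
  rw [eq_univ_of_forall fun ω => Function.mem_support.mpr (hpos ω).ne']
  exact pos_iff_ne_zero.mpr (NeZero.ne _)

lemma monotoneOn_mixedKiesCDF [IsFiniteMeasure μ] (hlam_meas : Measurable lam)
    (hbeta_meas : Measurable beta) (hlam : ∀ ω, 0 ≤ lam ω) (hbeta : ∀ ω, 0 ≤ beta ω) :
    MonotoneOn (mixedKiesCDF μ lam beta) (Ico 0 1) := fun _ hs _ ht hst =>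
  integral_mono (integrable_kiesCDF hlam_meas hbeta_meas hlam (Ico_subset_Icc_self hs))
    (integrable_kiesCDF hlam_meas hbeta_meas hlam (Ico_subset_Icc_self ht))
    fun ω => monotoneOn_kiesCDF (hlam ω) (hbeta ω) hs ht hst

lemma continuousOn_mixedKiesCDF [IsFiniteMeasure μ] (hlam_meas : Measurable lam)
    (hbeta_meas : Measurable beta) (hlam : ∀ ω, 0 ≤ lam ω) (hbeta : ∀ ω, 0 ≤ beta ω) :
    ContinuousOn (mixedKiesCDF μ lam beta) (Ico 0 1) :=
  continuousOn_of_dominated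
    (fun t _ => (measurable_kiesCDF hlam_meas hbeta_meas t).aestronglyMeasurable)
    (fun _ ht => ae_of_all _ fun ω => norm_kiesCDF_le_one (hlam ω) (Ico_subset_Icc_self ht))
    (integrable_const 1)
    (ae_of_all _ fun ω => (continuousOn_kiesCDF (hbeta ω)).mono fun _ ht => ht.2)

end Mixture

theorem mixed_kies_saturation_exists_unique
    {Ω : Type*} [MeasurableSpace Ω] (μ : Measure Ω) [IsProbabilityMeasure μ]
    (lam beta : Ω → ℝ) (hlam_meas : Measurable lam) (hbeta_meas : Measurable beta)
    (hlam_pos : ∀ ω, 0 < lam ω) (hbeta_pos : ∀ ω, 0 < beta ω)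
    (F : ℝ → ℝ)
    (hF : ∀ t, F t = ∫ ω, (1 - Real.exp (-(lam ω) * (t / (1 - t)) ^ (beta ω))) ∂μ) :
    ∃! d : ℝ, d ∈ Set.Ioo (0 : ℝ) 1 ∧ F d + d = 1 := by
  obtain rfl : F = mixedKiesCDF μ lam beta := funext hF
  have hlam := fun ω => (hlam_pos ω).le
  have hbeta := fun ω => (hbeta_pos ω).le
  exact existsUnique_mem_Ioo_add_self_eq_one
    (monotoneOn_mixedKiesCDF hlam_meas hbeta_meas hlam hbeta)
    (continuousOn_mixedKiesCDF hlam_meas hbeta_meas hlam hbeta)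
    (mixedKiesCDF_zero fun ω => (hbeta_pos ω).ne')
    (c := 1 / 2) (by norm_num) (mixedKiesCDF_pos hlam_meas hbeta_meas hlam_pos (by norm_num))
end

section
/- Let λ and β be positive random variables on a probability space (Ω, 𝓕, ℙ), and let γ(x) = x (1/𝔼[e^{−λ x^β}] − 1) for x ∈ [0, ∞). Then γ is strictly increasing on [0, ∞) with γ(0) = 0 and γ(x) → ∞ as x → ∞; consequently the equation γ(x) = 1 has a unique root x̄ ∈ (0, ∞), and the Hausdorff saturation of the mixed Kies distribution F(t) = 𝔼[1 − exp(−λ (t/(1−t))^β)] equals d = x̄/(x̄ + 1), i.e. F(x̄/(x̄+1)) + x̄/(x̄+1) = 1. -/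
/-!
Write `G x = 𝔼[exp (-λ x^β)]`, a mixture of Weibull survival functions, so that `γ x = x (1/G x - 1)`
and `1 - F t = G (t / (1 - t))`. Since `λ, β > 0`, `G` is continuous and strictly decreasing on
`[0, ∞)` with `G 0 = 1`; hence `1/G - 1` is nonnegative and increasing, and `γ` is strictly
increasing, vanishes at `0` and grows at least linearly. The intermediate value theorem gives the
unique root `x̄` of `γ = 1`, and `γ x̄ = 1` says exactly `G x̄ = x̄/(x̄+1)`, i.e. `d = x̄/(x̄+1)`
satisfies `F d = 1 - G x̄ = 1 - d`.
-/

open MeasureTheory Filter Set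

namespace MeasureTheory

theorem integral_lt_integral_of_forall_lt {α : Type*} [MeasurableSpace α] {μ : Measure α}
    [NeZero μ] {f g : α → ℝ} (hf : Integrable f μ) (hg : Integrable g μ) (h : ∀ a, f a < g a) :
    ∫ a, f a ∂μ < ∫ a, g a ∂μ := by
  have hsupp : Function.support (fun a => g a - f a) = univ :=
    eq_univ_of_forall fun a => (sub_pos.2 (h a)).ne'
  have hpos : 0 < ∫ a, g a - f a ∂μ :=
    (integral_pos_iff_support_of_nonneg (fun a => (sub_pos.2 (h a)).le) (hg.sub hf)).2 <| by
      rw [hsupp]; exact Measure.measure_univ_pos.2 (NeZero.ne μ)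
  rw [integral_sub hg hf] at hpos
  linarith

end MeasureTheory

section WeibullKernel

variable {l b x y : ℝ}

theorem exp_neg_mul_rpow_le_one (hl : 0 ≤ l) (hx : 0 ≤ x) : Real.exp (-l * x ^ b) ≤ 1 :=
  Real.exp_le_one_iff.2 <| by nlinarith [Real.rpow_nonneg hx b]

theorem exp_neg_mul_zero_rpow (hb : b ≠ 0) : Real.exp (-l * (0 : ℝ) ^ b) = 1 := by
  rw [Real.zero_rpow hb, mul_zero, Real.exp_zero]

theorem exp_neg_mul_rpow_lt_exp_neg_mul_rpow (hl : 0 < l) (hb : 0 < b) (hx : 0 ≤ x)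
    (hxy : x < y) : Real.exp (-l * y ^ b) < Real.exp (-l * x ^ b) := by
  have := Real.rpow_lt_rpow hx hxy hb
  exact Real.exp_lt_exp.2 (by nlinarith)

theorem continuous_exp_neg_mul_rpow (hb : 0 ≤ b) :
    Continuous fun x : ℝ => Real.exp (-l * x ^ b) :=
  Real.continuous_exp.comp (continuous_const.mul (Real.continuous_rpow_const hb))

end WeibullKernel

noncomputable def mixedWeibullSurvival {Ω : Type*} [MeasurableSpace Ω] (μ : Measure Ω)
    (lam beta : Ω → ℝ) (x : ℝ) : ℝ :=
  ∫ ω, Real.exp (-(lam ω) * x ^ (beta ω)) ∂μ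

namespace mixedWeibullSurvival

variable {Ω : Type*} [MeasurableSpace Ω] {μ : Measure Ω} {lam beta : Ω → ℝ} {x : ℝ}

theorem integrable [IsFiniteMeasure μ] (hlam_meas : Measurable lam) (hbeta_meas : Measurable beta)
    (hlam : ∀ ω, 0 ≤ lam ω) (hx : 0 ≤ x) :
    Integrable (fun ω => Real.exp (-(lam ω) * x ^ (beta ω))) μ := by
  refine (integrable_const (1 : ℝ)).mono'
    (hlam_meas.neg.mul (hbeta_meas.const_pow x)).exp.aestronglyMeasurable ?_
  refine .of_forall fun ω => ?_
  rw [Real.norm_of_nonneg (Real.exp_pos _).le]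
  exact exp_neg_mul_rpow_le_one (hlam ω) hx

theorem pos [NeZero μ] (h : Integrable (fun ω => Real.exp (-(lam ω) * x ^ (beta ω))) μ) :
    0 < mixedWeibullSurvival μ lam beta x :=
  integral_exp_pos h

theorem integral_one_sub_exp [IsProbabilityMeasure μ]
    (h : Integrable (fun ω => Real.exp (-(lam ω) * x ^ (beta ω))) μ) :
    ∫ ω, (1 - Real.exp (-(lam ω) * x ^ (beta ω))) ∂μ = 1 - mixedWeibullSurvival μ lam beta x := by
  rw [integral_sub (integrable_const 1) h, integral_const, probReal_univ, one_smul,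
    mixedWeibullSurvival]

theorem zero [IsProbabilityMeasure μ] (hbeta : ∀ ω, 0 < beta ω) :
    mixedWeibullSurvival μ lam beta 0 = 1 := by
  simp only [mixedWeibullSurvival, fun ω => exp_neg_mul_zero_rpow (l := lam ω) (hbeta ω).ne']
  simp

variable [IsProbabilityMeasure μ] (hlam_meas : Measurable lam) (hbeta_meas : Measurable beta)
  (hlam : ∀ ω, 0 < lam ω) (hbeta : ∀ ω, 0 < beta ω)
include hlam_meas hbeta_meas hlam hbeta

theorem strictAntiOn : StrictAntiOn (mixedWeibullSurvival μ lam beta) (Ici 0) :=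
  fun _ hx _ hy hxy => integral_lt_integral_of_forall_lt
    (integrable hlam_meas hbeta_meas (fun ω => (hlam ω).le) hy)
    (integrable hlam_meas hbeta_meas (fun ω => (hlam ω).le) hx)
    fun ω => exp_neg_mul_rpow_lt_exp_neg_mul_rpow (hlam ω) (hbeta ω) hx hxy

theorem continuousOn : ContinuousOn (mixedWeibullSurvival μ lam beta) (Ici 0) := by
  refine continuousOn_of_dominated (bound := fun _ => 1)
    (fun x hx => (integrable hlam_meas hbeta_meas (fun ω => (hlam ω).le) hx).aestronglyMeasurable)
    (fun x hx => .of_forall fun ω => ?_) (integrable_const 1)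
    (.of_forall fun ω => (continuous_exp_neg_mul_rpow (hbeta ω).le).continuousOn)
  rw [Real.norm_of_nonneg (Real.exp_pos _).le]
  exact exp_neg_mul_rpow_le_one (hlam ω).le hx

end mixedWeibullSurvival

theorem existsUnique_gt_eq_of_strictMonoOn_Ici {f : ℝ → ℝ} {a c : ℝ}
    (hcont : ContinuousOn f (Ici a)) (hmono : StrictMonoOn f (Ici a))
    (htop : Tendsto f atTop atTop) (hac : f a < c) : ∃! x, a < x ∧ f x = c := by
  obtain ⟨x, hx, hfx⟩ := intermediate_value_Ici hcont htop (mem_Ici.2 hac.le)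
  have hax : a < x := (mem_Ici.1 hx).lt_of_ne <| by rintro rfl; exact hac.ne hfx
  exact ⟨x, ⟨hax, hfx⟩, fun y ⟨hay, hfy⟩ =>
    hmono.injOn (mem_Ici.2 hay.le) hx (hfy.trans hfx.symm)⟩

noncomputable def saturationGamma (G : ℝ → ℝ) (x : ℝ) : ℝ :=
  x * (1 / G x - 1)

namespace saturationGamma

variable {G : ℝ → ℝ} {x : ℝ}

@[simp]
theorem apply_zero : saturationGamma G 0 = 0 := zero_mul _

theorem eq_one_iff (hx : 0 ≤ x) (hG : G x ≠ 0) : saturationGamma G x = 1 ↔ G x = x / (x + 1) := by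
  rw [saturationGamma, eq_div_iff (by positivity : x + 1 ≠ 0)]
  field_simp
  constructor <;> intro h <;> linarith

theorem continuousOn (hcont : ContinuousOn G (Ici 0)) (hpos : ∀ x ∈ Ici (0 : ℝ), 0 < G x) :
    ContinuousOn (saturationGamma G) (Ici 0) :=
  continuousOn_id.mul <|
    (continuousOn_const.div hcont fun x hx => (hpos x hx).ne').sub continuousOn_const

variable (hG0 : G 0 = 1) (hanti : StrictAntiOn G (Ici 0)) (hpos : ∀ x ∈ Ici (0 : ℝ), 0 < G x)
include hG0 hanti hpos

theorem strictMonoOn : StrictMonoOn (saturationGamma G) (Ici 0) := by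
  intro x hx y hy hxy
  have hGx_le : G x ≤ 1 := hG0 ▸ hanti.antitoneOn self_mem_Ici hx (mem_Ici.1 hx)
  have hfac_nonneg : 0 ≤ 1 / G x - 1 := by
    rw [sub_nonneg, le_one_div (by norm_num) (hpos x hx), div_one]; exact hGx_le
  have hfac_lt : 1 / G x - 1 < 1 / G y - 1 :=
    sub_lt_sub_right (one_div_lt_one_div_of_lt (hpos y hy) (hanti hx hy hxy)) 1
  calc x * (1 / G x - 1) ≤ y * (1 / G x - 1) := mul_le_mul_of_nonneg_right hxy.le hfac_nonneg
    _ < y * (1 / G y - 1) := mul_lt_mul_of_pos_left hfac_lt ((mem_Ici.1 hx).trans_lt hxy)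

theorem tendsto_atTop : Tendsto (saturationGamma G) atTop atTop := by
  have hslope : 0 < saturationGamma G 1 := by
    simpa using strictMonoOn hG0 hanti hpos self_mem_Ici (mem_Ici.2 zero_le_one) one_pos
  refine tendsto_atTop_mono' _ ?_ (tendsto_id.atTop_mul_const hslope)
  filter_upwards [eventually_ge_atTop 1] with x hx
  have hfac : 1 / G 1 - 1 ≤ 1 / G x - 1 := by
    gcongr
    · exact hpos x (mem_Ici.2 (zero_le_one.trans hx))
    · exact hanti.antitoneOn (mem_Ici.2 zero_le_one) (mem_Ici.2 (zero_le_one.trans hx)) hx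
  simpa [saturationGamma] using mul_le_mul_of_nonneg_left hfac (zero_le_one.trans hx)

end saturationGamma

open mixedWeibullSurvival saturationGamma in
theorem mixed_kies_saturation_via_gamma
    {Ω : Type*} [MeasurableSpace Ω] (μ : Measure Ω) [IsProbabilityMeasure μ]
    (lam beta : Ω → ℝ) (hlam_meas : Measurable lam) (hbeta_meas : Measurable beta)
    (hlam_pos : ∀ ω, 0 < lam ω) (hbeta_pos : ∀ ω, 0 < beta ω)
    (F γ : ℝ → ℝ)
    (hF : ∀ t, F t = ∫ ω, (1 - Real.exp (-(lam ω) * (t / (1 - t)) ^ (beta ω))) ∂μ)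
    (hγ : ∀ x, γ x = x * (1 / (∫ ω, Real.exp (-(lam ω) * x ^ (beta ω)) ∂μ) - 1)) :
    StrictMonoOn γ (Set.Ici 0) ∧ γ 0 = 0 ∧ Tendsto γ atTop atTop ∧
      (∃! x : ℝ, 0 < x ∧ γ x = 1) ∧
      (∀ x : ℝ, 0 < x → γ x = 1 → F (x / (x + 1)) + x / (x + 1) = 1) := by
  set G := mixedWeibullSurvival μ lam beta
  obtain rfl : γ = saturationGamma G := funext hγ
  have hint : ∀ x ∈ Ici (0 : ℝ), Integrable (fun ω => Real.exp (-(lam ω) * x ^ (beta ω))) μ :=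
    fun x hx => integrable hlam_meas hbeta_meas (fun ω => (hlam_pos ω).le) hx
  have hpos : ∀ x ∈ Ici (0 : ℝ), 0 < G x := fun x hx => pos (hint x hx)
  have hG0 : G 0 = 1 := zero hbeta_pos
  have hanti : StrictAntiOn G (Ici 0) := strictAntiOn hlam_meas hbeta_meas hlam_pos hbeta_pos
  have hmono := saturationGamma.strictMonoOn hG0 hanti hpos
  have htop := saturationGamma.tendsto_atTop hG0 hanti hpos
  refine ⟨hmono, apply_zero, htop, ?_, fun x hx hγx => ?_⟩
  · refine existsUnique_gt_eq_of_strictMonoOn_Ici ?_ hmono htop (by simp)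
    exact saturationGamma.continuousOn
      (mixedWeibullSurvival.continuousOn hlam_meas hbeta_meas hlam_pos hbeta_pos) hpos
  · have hGx : G x = x / (x + 1) := (eq_one_iff hx.le (hpos x hx.le).ne').1 hγx
    have hratio : x / (x + 1) / (1 - x / (x + 1)) = x := by field_simp; ring
    rw [hF, hratio, integral_one_sub_exp (hint x hx.le), ← hGx]
    ring
end

section
/- Let α > 0, θ > 0 and β > 1/α, and let λ be gamma distributed with shape α and rate θ (density (θ^α/Γ(α)) x^{α−1} e^{−θ x} on (0, ∞)). Then for every t ∈ (0,1): (i) the gamma Kies mixture has complementary CDF ∫_0^∞ (θ^α/Γ(α)) x^{α−1} e^{−θ x} exp(−x (t/(1−t))^β) dx = (θ (1−t)^β / (θ (1−t)^β + t^β))^α, so that F(t) = 1 − (θ (1−t)^β / (θ (1−t)^β + t^β))^α; and (ii) F is differentiable at t with F′(t) = α θ^α β t^{β−1} (1−t)^{αβ−1} / (θ (1−t)^β + t^β)^{α+1}. -/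
/-!
Conditionally on `λ = x`, the Kies survival function is `exp (-x u)` with `u = (t / (1 - t)) ^ β`,
so the mixture's survival function is the Laplace transform of the gamma law at `u`, namely
`(θ / (θ + u)) ^ α`; clearing the denominators of `u` gives the closed form.
-/

open MeasureTheory Real Set

section

variable {α θ β t r : ℝ}

theorem integral_gamma_density_mul_exp_neg (hα : 0 < α) (hθ : 0 < θ) (hr : 0 < r) :
    ∫ x in Ioi (0 : ℝ), θ ^ α / Gamma α * x ^ (α - 1) * exp (-r * x) = (θ / r) ^ α := by
  simp_rw [neg_mul, mul_assoc]
  rw [integral_const_mul, integral_rpow_mul_exp_neg_mul_Ioi hα hr, div_rpow hθ.le hr.le,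
    div_rpow zero_le_one hr.le, one_rpow]
  have hΓ : Gamma α ≠ 0 := (Gamma_pos_of_pos hα).ne'
  field_simp

theorem integrableOn_gamma_density_mul_exp_neg (hα : 0 < α) (hθ : 0 < θ) (hr : 0 < r) :
    IntegrableOn (fun x ↦ θ ^ α / Gamma α * x ^ (α - 1) * exp (-r * x)) (Ioi 0) :=
  Integrable.of_integral_ne_zero <| by
    rw [integral_gamma_density_mul_exp_neg hα hθ hr]
    exact (rpow_pos_of_pos (div_pos hθ hr) α).ne'

theorem kies_denom_pos (hθ : 0 < θ) (ht : t ∈ Ioo (0 : ℝ) 1) :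
    0 < θ * (1 - t) ^ β + t ^ β := by
  have := rpow_pos_of_pos (sub_pos.2 ht.2) β
  have := rpow_pos_of_pos ht.1 β
  positivity

theorem div_add_odds_rpow (hθ : 0 < θ) (ht : t ∈ Ioo (0 : ℝ) 1) :
    θ / (θ + (t / (1 - t)) ^ β) = θ * (1 - t) ^ β / (θ * (1 - t) ^ β + t ^ β) := by
  have hu : 0 < (t / (1 - t)) ^ β := rpow_pos_of_pos (div_pos ht.1 (sub_pos.2 ht.2)) β
  have h1t : 0 < (1 - t) ^ β := rpow_pos_of_pos (sub_pos.2 ht.2) β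
  rw [div_eq_div_iff (by positivity) (kies_denom_pos hθ ht).ne',
    div_rpow ht.1.le (sub_pos.2 ht.2).le]
  field_simp

theorem integral_gamma_kies_survival (hα : 0 < α) (hθ : 0 < θ) (ht : t ∈ Ioo (0 : ℝ) 1) :
    ∫ x in Ioi (0 : ℝ), θ ^ α / Gamma α * x ^ (α - 1) * exp (-θ * x) *
        exp (-x * (t / (1 - t)) ^ β)
      = (θ * (1 - t) ^ β / (θ * (1 - t) ^ β + t ^ β)) ^ α := by
  have hu : 0 < (t / (1 - t)) ^ β := rpow_pos_of_pos (div_pos ht.1 (sub_pos.2 ht.2)) β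
  have hexp : ∀ x : ℝ, exp (-θ * x) * exp (-x * (t / (1 - t)) ^ β)
      = exp (-(θ + (t / (1 - t)) ^ β) * x) := fun x ↦ by rw [← exp_add]; ring_nf
  simp_rw [mul_assoc _ (exp _), hexp]
  rw [integral_gamma_density_mul_exp_neg hα hθ (by positivity), div_add_odds_rpow hθ ht]

theorem integral_gamma_kies_cdf (hα : 0 < α) (hθ : 0 < θ) (ht : t ∈ Ioo (0 : ℝ) 1) :
    ∫ x in Ioi (0 : ℝ), θ ^ α / Gamma α * x ^ (α - 1) * exp (-θ * x) *
        (1 - exp (-x * (t / (1 - t)) ^ β))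
      = 1 - (θ * (1 - t) ^ β / (θ * (1 - t) ^ β + t ^ β)) ^ α := by
  have hQ : 0 < θ * (1 - t) ^ β / (θ * (1 - t) ^ β + t ^ β) :=
    div_pos (mul_pos hθ (rpow_pos_of_pos (sub_pos.2 ht.2) β)) (kies_denom_pos hθ ht)
  have hsurv : IntegrableOn (fun x ↦ θ ^ α / Gamma α * x ^ (α - 1) * exp (-θ * x) *
      exp (-x * (t / (1 - t)) ^ β)) (Ioi 0) := Integrable.of_integral_ne_zero <| by
    rw [integral_gamma_kies_survival hα hθ ht]
    exact (rpow_pos_of_pos hQ α).ne'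
  simp_rw [mul_one_sub]
  rw [integral_sub (integrableOn_gamma_density_mul_exp_neg hα hθ hθ) hsurv,
    integral_gamma_density_mul_exp_neg hα hθ hθ, div_self hθ.ne', one_rpow,
    integral_gamma_kies_survival hα hθ ht]

theorem hasDerivAt_kies_odds_ratio (hθ : 0 < θ) (ht : t ∈ Ioo (0 : ℝ) 1) :
    HasDerivAt (fun s ↦ θ * (1 - s) ^ β / (θ * (1 - s) ^ β + s ^ β))
      (-(θ * β * t ^ (β - 1) * (1 - t) ^ (β - 1)) / (θ * (1 - t) ^ β + t ^ β) ^ 2) t := by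
  have hD := kies_denom_pos (β := β) hθ ht
  obtain ⟨ht0, ht1⟩ := ht
  have h1t : 0 < 1 - t := sub_pos.2 ht1
  have hN : HasDerivAt (fun s ↦ θ * (1 - s) ^ β) (θ * (-1 * β * (1 - t) ^ (β - 1))) t :=
    (((hasDerivAt_id' t).const_sub 1).rpow_const (Or.inl h1t.ne')).const_mul θ
  have hpow : HasDerivAt (fun s ↦ s ^ β) (β * t ^ (β - 1)) t :=
    hasDerivAt_rpow_const (Or.inl ht0.ne')
  refine (hN.div (hN.add hpow) hD.ne').congr_deriv ?_
  have h1tβ : (1 - t) ^ β = (1 - t) ^ (β - 1) * (1 - t) := by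
    rw [← rpow_add_one h1t.ne', sub_add_cancel]
  have htβ : t ^ β = t ^ (β - 1) * t := by
    rw [← rpow_add_one ht0.ne', sub_add_cancel]
  have hnum : θ * (-1 * β * (1 - t) ^ (β - 1)) * (θ * (1 - t) ^ β + t ^ β)
      - θ * (1 - t) ^ β * (θ * (-1 * β * (1 - t) ^ (β - 1)) + β * t ^ (β - 1))
      = -(θ * β * t ^ (β - 1) * (1 - t) ^ (β - 1)) := by
    rw [h1tβ, htβ]; ring
  rw [Pi.add_apply, hnum]

theorem hasDerivAt_gamma_kies_cdf (hθ : 0 < θ) (ht : t ∈ Ioo (0 : ℝ) 1) :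
    HasDerivAt (fun s ↦ 1 - (θ * (1 - s) ^ β / (θ * (1 - s) ^ β + s ^ β)) ^ α)
      (α * θ ^ α * β * t ^ (β - 1) * (1 - t) ^ (α * β - 1) /
        (θ * (1 - t) ^ β + t ^ β) ^ (α + 1)) t := by
  have h1t : 0 < 1 - t := sub_pos.2 ht.2
  have hD := kies_denom_pos (β := β) hθ ht
  set D := θ * (1 - t) ^ β + t ^ β with hD_def
  have hQ : 0 < θ * (1 - t) ^ β / D := div_pos (mul_pos hθ (rpow_pos_of_pos h1t β)) hD
  refine (((hasDerivAt_kies_odds_ratio hθ ht).rpow_const (Or.inl hQ.ne')).const_sub 1).congr_deriv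
    ?_
  have hQpow : (θ * (1 - t) ^ β / D) ^ (α - 1)
      = θ ^ (α - 1) * (1 - t) ^ (β * (α - 1)) / D ^ (α - 1) := by
    rw [div_rpow (by positivity) hD.le, mul_rpow hθ.le (rpow_pos_of_pos h1t β).le,
      ← rpow_mul h1t.le]
  have hθα : θ ^ α = θ ^ (α - 1) * θ := by rw [← rpow_add_one hθ.ne', sub_add_cancel]
  have h1tαβ : (1 - t) ^ (α * β - 1) = (1 - t) ^ (β * (α - 1)) * (1 - t) ^ (β - 1) := by
    rw [← rpow_add h1t]; ring_nf
  have hDα : D ^ (α + 1) = D ^ (α - 1) * D ^ 2 := by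
    rw [show α + 1 = α - 1 + (2 : ℕ) by push_cast; ring, rpow_add_natCast hD.ne']
  have := rpow_pos_of_pos hD (α - 1)
  rw [← hD_def, hQpow, hθα, h1tαβ, hDα]
  field_simp

end

theorem gamma_kies_mixture_general
    (α θ β : ℝ) (hα : 0 < α) (hθ : 0 < θ) (F : ℝ → ℝ)
    (hF : ∀ t, F t = ∫ x in Set.Ioi (0 : ℝ),
        θ ^ α / Real.Gamma α * x ^ (α - 1) * Real.exp (-θ * x) *
          (1 - Real.exp (-x * (t / (1 - t)) ^ β)))
    (t : ℝ) (ht : t ∈ Set.Ioo (0 : ℝ) 1) :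
    (∫ x in Set.Ioi (0 : ℝ), θ ^ α / Real.Gamma α * x ^ (α - 1) * Real.exp (-θ * x) *
          Real.exp (-x * (t / (1 - t)) ^ β))
        = (θ * (1 - t) ^ β / (θ * (1 - t) ^ β + t ^ β)) ^ α ∧
    F t = 1 - (θ * (1 - t) ^ β / (θ * (1 - t) ^ β + t ^ β)) ^ α ∧
    HasDerivAt F
      (α * θ ^ α * β * t ^ (β - 1) * (1 - t) ^ (α * β - 1) /
        (θ * (1 - t) ^ β + t ^ β) ^ (α + 1)) t := by
  have hcdf : ∀ s ∈ Ioo (0 : ℝ) 1,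
      F s = 1 - (θ * (1 - s) ^ β / (θ * (1 - s) ^ β + s ^ β)) ^ α := fun s hs ↦
    (hF s).trans (integral_gamma_kies_cdf hα hθ hs)
  refine ⟨integral_gamma_kies_survival hα hθ ht, hcdf t ht, ?_⟩
  refine (hasDerivAt_gamma_kies_cdf hθ ht).congr_of_eventuallyEq ?_
  filter_upwards [Ioo_mem_nhds ht.1 ht.2] with s hs using hcdf s hs

theorem gamma_kies_mixture
    (α θ β : ℝ) (hα : 0 < α) (hθ : 0 < θ) (hβ : 1 / α < β) (F : ℝ → ℝ)
    (hF : ∀ t, F t = ∫ x in Set.Ioi (0 : ℝ),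
        θ ^ α / Real.Gamma α * x ^ (α - 1) * Real.exp (-θ * x) *
          (1 - Real.exp (-x * (t / (1 - t)) ^ β)))
    (t : ℝ) (ht : t ∈ Set.Ioo (0 : ℝ) 1) :
    (∫ x in Set.Ioi (0 : ℝ), θ ^ α / Real.Gamma α * x ^ (α - 1) * Real.exp (-θ * x) *
          Real.exp (-x * (t / (1 - t)) ^ β))
        = (θ * (1 - t) ^ β / (θ * (1 - t) ^ β + t ^ β)) ^ α ∧
    F t = 1 - (θ * (1 - t) ^ β / (θ * (1 - t) ^ β + t ^ β)) ^ α ∧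
    HasDerivAt F
      (α * θ ^ α * β * t ^ (β - 1) * (1 - t) ^ (α * β - 1) /
        (θ * (1 - t) ^ β + t ^ β) ^ (α + 1)) t :=
  gamma_kies_mixture_general α θ β hα hθ F hF t ht
end
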